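/- arXiv:2312.17178 — 3 statements merged into one kernel-verified Lean document; each statement's English description precedes it below -/
import Mathlib

section
/- Let λ be a dominant coweight of affine E8 with Kac coefficients n₁,…,n₆,n_{4'},n_{3'},n_{2'} ≥ 0, level k = Σ_{i=1}^6 i·n_i + 4n_{4'} + 3n_{3'} + 2n_{2'}, and finite part λ̄ = Σ_{i≠1} n_i ϖ_i^∨. Then the minimal integer m with m·c ≥ λ̄ (i.e. m·c − λ̄ a nonnegative combination of simple coroots, c the canonical central element) equals k − N_ρ, where N_ρ = Σ_{i=1}^6 n_i + min(⌊(n_{3'}+n_{4'})/2⌋, ⌊(n_{2'}+n_{3'}+2n_{4'})/3⌋). -/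
/-- The Cartan matrix of E8, nodes ordered by Coxeter labels `2,3,4,5,6,4',2',3'`. -/
def E8Cartan : Matrix (Fin 8) (Fin 8) ℤ :=
  !![ 2, -1,  0,  0,  0,  0,  0,  0;
     -1,  2, -1,  0,  0,  0,  0,  0;
      0, -1,  2, -1,  0,  0,  0,  0;
      0,  0, -1,  2, -1,  0,  0,  0;
      0,  0,  0, -1,  2, -1,  0, -1;
      0,  0,  0,  0, -1,  2, -1,  0;
      0,  0,  0,  0,  0, -1,  2,  0;
      0,  0,  0,  0, -1,  0,  0,  2]

/-- The Coxeter labels of the finite E8 nodes, ordered `2,3,4,5,6,4',2',3'`; these are also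
the coroot-basis coefficients of the canonical central element `c`. -/
def cox : Fin 8 → ℕ := ![2, 3, 4, 5, 6, 4, 2, 3]

/-- Lemma 3.2(b): for a dominant affine E8 coweight with Kac coefficients
`n = (n₁, n₂, …, n₆, n₄', n₂', n₃')` (affine index `0 ↦ node 1`, finite index `i+1` in the
order `2,3,4,5,6,4',2',3'`), level `k = Σᵢ cᵢ nᵢ`, finite part `λ̄ = Σ_{i≠1} nᵢ ϖᵢ^∨` with
coroot coordinates `b` (i.e. `C·b = n`), the least integer `m` with `m·c ≥ λ̄` (meaning
`m·c − λ̄` is a nonnegative combination of simple coroots, i.e. `bᵢ ≤ m·cᵢ` for all `i`)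
equals `k − N_ρ`, where
`N_ρ = Σ_{i=1}^{6} nᵢ + min(⌊(n₃'+n₄')/2⌋, ⌊(n₂'+n₃'+2n₄')/3⌋)`. -/
theorem min_multiple_of_c (n : Fin 9 → ℕ) (b : Fin 8 → ℚ)
    (hb : ∀ i, ∑ j, (E8Cartan i j : ℚ) * b j = (n i.succ : ℚ)) :
    IsLeast {m : ℤ | ∀ i, b i ≤ (m : ℚ) * (cox i : ℚ)}
      (((n 0 + ∑ i : Fin 8, cox i * n i.succ : ℕ) : ℤ)
        - (((n 0 + n 1 + n 2 + n 3 + n 4 + n 5)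
            + min ((n 8 + n 6) / 2) ((n 7 + n 8 + 2 * n 6) / 3) : ℕ) : ℤ)) := by
  have h0 : 2*b 0 - b 1 = (n 1 : ℚ) := by
    have := hb 0
    rw [Fin.sum_univ_eight] at this
    norm_num [show E8Cartan 0 0 = 2 from rfl, show E8Cartan 0 1 = -1 from rfl, show E8Cartan 0 2 = 0 from rfl, show E8Cartan 0 3 = 0 from rfl, show E8Cartan 0 4 = 0 from rfl, show E8Cartan 0 5 = 0 from rfl, show E8Cartan 0 6 = 0 from rfl, show E8Cartan 0 7 = 0 from rfl,
      show (Fin.succ 0 : Fin 9) = 1 from rfl] at this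
    linarith
  have h1 : -b 0 + 2*b 1 - b 2 = (n 2 : ℚ) := by
    have := hb 1
    rw [Fin.sum_univ_eight] at this
    norm_num [show E8Cartan 1 0 = -1 from rfl, show E8Cartan 1 1 = 2 from rfl, show E8Cartan 1 2 = -1 from rfl, show E8Cartan 1 3 = 0 from rfl, show E8Cartan 1 4 = 0 from rfl, show E8Cartan 1 5 = 0 from rfl, show E8Cartan 1 6 = 0 from rfl, show E8Cartan 1 7 = 0 from rfl,
      show (Fin.succ 1 : Fin 9) = 2 from rfl] at this
    linarith
  have h2 : -b 1 + 2*b 2 - b 3 = (n 3 : ℚ) := by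
    have := hb 2
    rw [Fin.sum_univ_eight] at this
    norm_num [show E8Cartan 2 0 = 0 from rfl, show E8Cartan 2 1 = -1 from rfl, show E8Cartan 2 2 = 2 from rfl, show E8Cartan 2 3 = -1 from rfl, show E8Cartan 2 4 = 0 from rfl, show E8Cartan 2 5 = 0 from rfl, show E8Cartan 2 6 = 0 from rfl, show E8Cartan 2 7 = 0 from rfl,
      show (Fin.succ 2 : Fin 9) = 3 from rfl] at this
    linarith
  have h3 : -b 2 + 2*b 3 - b 4 = (n 4 : ℚ) := by
    have := hb 3
    rw [Fin.sum_univ_eight] at this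
    norm_num [show E8Cartan 3 0 = 0 from rfl, show E8Cartan 3 1 = 0 from rfl, show E8Cartan 3 2 = -1 from rfl, show E8Cartan 3 3 = 2 from rfl, show E8Cartan 3 4 = -1 from rfl, show E8Cartan 3 5 = 0 from rfl, show E8Cartan 3 6 = 0 from rfl, show E8Cartan 3 7 = 0 from rfl,
      show (Fin.succ 3 : Fin 9) = 4 from rfl] at this
    linarith
  have h4 : -b 3 + 2*b 4 - b 5 - b 7 = (n 5 : ℚ) := by
    have := hb 4
    rw [Fin.sum_univ_eight] at this
    norm_num [show E8Cartan 4 0 = 0 from rfl, show E8Cartan 4 1 = 0 from rfl, show E8Cartan 4 2 = 0 from rfl, show E8Cartan 4 3 = -1 from rfl, show E8Cartan 4 4 = 2 from rfl, show E8Cartan 4 5 = -1 from rfl, show E8Cartan 4 6 = 0 from rfl, show E8Cartan 4 7 = -1 from rfl,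
      show (Fin.succ 4 : Fin 9) = 5 from rfl] at this
    linarith
  have h5 : -b 4 + 2*b 5 - b 6 = (n 6 : ℚ) := by
    have := hb 5
    rw [Fin.sum_univ_eight] at this
    norm_num [show E8Cartan 5 0 = 0 from rfl, show E8Cartan 5 1 = 0 from rfl, show E8Cartan 5 2 = 0 from rfl, show E8Cartan 5 3 = 0 from rfl, show E8Cartan 5 4 = -1 from rfl, show E8Cartan 5 5 = 2 from rfl, show E8Cartan 5 6 = -1 from rfl, show E8Cartan 5 7 = 0 from rfl,
      show (Fin.succ 5 : Fin 9) = 6 from rfl] at this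
    linarith
  have h6 : -b 5 + 2*b 6 = (n 7 : ℚ) := by
    have := hb 6
    rw [Fin.sum_univ_eight] at this
    norm_num [show E8Cartan 6 0 = 0 from rfl, show E8Cartan 6 1 = 0 from rfl, show E8Cartan 6 2 = 0 from rfl, show E8Cartan 6 3 = 0 from rfl, show E8Cartan 6 4 = 0 from rfl, show E8Cartan 6 5 = -1 from rfl, show E8Cartan 6 6 = 2 from rfl, show E8Cartan 6 7 = 0 from rfl,
      show (Fin.succ 6 : Fin 9) = 7 from rfl] at this
    linarith
  have h7 : -b 4 + 2*b 7 = (n 8 : ℚ) := by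
    have := hb 7
    rw [Fin.sum_univ_eight] at this
    norm_num [show E8Cartan 7 0 = 0 from rfl, show E8Cartan 7 1 = 0 from rfl, show E8Cartan 7 2 = 0 from rfl, show E8Cartan 7 3 = 0 from rfl, show E8Cartan 7 4 = -1 from rfl, show E8Cartan 7 5 = 0 from rfl, show E8Cartan 7 6 = 0 from rfl, show E8Cartan 7 7 = 2 from rfl,
      show (Fin.succ 7 : Fin 9) = 8 from rfl] at this
    linarith
  have e0 : b 0 = 2*(n 1:ℚ) + 3*(n 2:ℚ) + 4*(n 3:ℚ) + 5*(n 4:ℚ) + 6*(n 5:ℚ) + 4*(n 6:ℚ) + 2*(n 7:ℚ) + 3*(n 8:ℚ) := by linear_combination (2:ℚ)*h0 + (3:ℚ)*h1 + (4:ℚ)*h2 + (5:ℚ)*h3 + (6:ℚ)*h4 + (4:ℚ)*h5 + (2:ℚ)*h6 + (3:ℚ)*h7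
  have e1 : b 1 = 3*(n 1:ℚ) + 6*(n 2:ℚ) + 8*(n 3:ℚ) + 10*(n 4:ℚ) + 12*(n 5:ℚ) + 8*(n 6:ℚ) + 4*(n 7:ℚ) + 6*(n 8:ℚ) := by linear_combination (3:ℚ)*h0 + (6:ℚ)*h1 + (8:ℚ)*h2 + (10:ℚ)*h3 + (12:ℚ)*h4 + (8:ℚ)*h5 + (4:ℚ)*h6 + (6:ℚ)*h7
  have e2 : b 2 = 4*(n 1:ℚ) + 8*(n 2:ℚ) + 12*(n 3:ℚ) + 15*(n 4:ℚ) + 18*(n 5:ℚ) + 12*(n 6:ℚ) + 6*(n 7:ℚ) + 9*(n 8:ℚ) := by linear_combination (4:ℚ)*h0 + (8:ℚ)*h1 + (12:ℚ)*h2 + (15:ℚ)*h3 + (18:ℚ)*h4 + (12:ℚ)*h5 + (6:ℚ)*h6 + (9:ℚ)*h7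
  have e3 : b 3 = 5*(n 1:ℚ) + 10*(n 2:ℚ) + 15*(n 3:ℚ) + 20*(n 4:ℚ) + 24*(n 5:ℚ) + 16*(n 6:ℚ) + 8*(n 7:ℚ) + 12*(n 8:ℚ) := by linear_combination (5:ℚ)*h0 + (10:ℚ)*h1 + (15:ℚ)*h2 + (20:ℚ)*h3 + (24:ℚ)*h4 + (16:ℚ)*h5 + (8:ℚ)*h6 + (12:ℚ)*h7
  have e4 : b 4 = 6*(n 1:ℚ) + 12*(n 2:ℚ) + 18*(n 3:ℚ) + 24*(n 4:ℚ) + 30*(n 5:ℚ) + 20*(n 6:ℚ) + 10*(n 7:ℚ) + 15*(n 8:ℚ) := by linear_combination (6:ℚ)*h0 + (12:ℚ)*h1 + (18:ℚ)*h2 + (24:ℚ)*h3 + (30:ℚ)*h4 + (20:ℚ)*h5 + (10:ℚ)*h6 + (15:ℚ)*h7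
  have e5 : b 5 = 4*(n 1:ℚ) + 8*(n 2:ℚ) + 12*(n 3:ℚ) + 16*(n 4:ℚ) + 20*(n 5:ℚ) + 14*(n 6:ℚ) + 7*(n 7:ℚ) + 10*(n 8:ℚ) := by linear_combination (4:ℚ)*h0 + (8:ℚ)*h1 + (12:ℚ)*h2 + (16:ℚ)*h3 + (20:ℚ)*h4 + (14:ℚ)*h5 + (7:ℚ)*h6 + (10:ℚ)*h7
  have e6 : b 6 = 2*(n 1:ℚ) + 4*(n 2:ℚ) + 6*(n 3:ℚ) + 8*(n 4:ℚ) + 10*(n 5:ℚ) + 7*(n 6:ℚ) + 4*(n 7:ℚ) + 5*(n 8:ℚ) := by linear_combination (2:ℚ)*h0 + (4:ℚ)*h1 + (6:ℚ)*h2 + (8:ℚ)*h3 + (10:ℚ)*h4 + (7:ℚ)*h5 + (4:ℚ)*h6 + (5:ℚ)*h7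
  have e7 : b 7 = 3*(n 1:ℚ) + 6*(n 2:ℚ) + 9*(n 3:ℚ) + 12*(n 4:ℚ) + 15*(n 5:ℚ) + 10*(n 6:ℚ) + 5*(n 7:ℚ) + 8*(n 8:ℚ) := by linear_combination (3:ℚ)*h0 + (6:ℚ)*h1 + (9:ℚ)*h2 + (12:ℚ)*h3 + (15:ℚ)*h4 + (10:ℚ)*h5 + (5:ℚ)*h6 + (8:ℚ)*h7
  have hsum : (n 0 + ∑ i : Fin 8, cox i * n i.succ : ℕ)
      = n 0 + 2*n 1 + 3*n 2 + 4*n 3 + 5*n 4 + 6*n 5 + 4*n 6 + 2*n 7 + 3*n 8 := by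
    rw [Fin.sum_univ_eight]
    norm_num [show cox 0 = 2 from rfl, show cox 1 = 3 from rfl, show cox 2 = 4 from rfl, show cox 3 = 5 from rfl, show cox 4 = 6 from rfl, show cox 5 = 4 from rfl, show cox 6 = 2 from rfl, show cox 7 = 3 from rfl,
      show (Fin.succ 0 : Fin 9) = 1 from rfl, show (Fin.succ 1 : Fin 9) = 2 from rfl, show (Fin.succ 2 : Fin 9) = 3 from rfl, show (Fin.succ 3 : Fin 9) = 4 from rfl, show (Fin.succ 4 : Fin 9) = 5 from rfl, show (Fin.succ 5 : Fin 9) = 6 from rfl, show (Fin.succ 6 : Fin 9) = 7 from rfl, show (Fin.succ 7 : Fin 9) = 8 from rfl]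
    ring
  rw [hsum]
  constructor
  · intro i
    fin_cases i
    · show b 0 ≤ _ * ((cox 0 : ℕ) : ℚ)
      rw [e0, show ((cox 0 : ℕ) : ℚ) = 2 by norm_num [show cox 0 = 2 from rfl]]
      have key : 2*(n 1 : ℤ) + 3*(n 2 : ℤ) + 4*(n 3 : ℤ) + 5*(n 4 : ℤ) + 6*(n 5 : ℤ) + 4*(n 6 : ℤ) + 2*(n 7 : ℤ) + 3*(n 8 : ℤ) ≤
          (((n 0 + 2*n 1 + 3*n 2 + 4*n 3 + 5*n 4 + 6*n 5 + 4*n 6 + 2*n 7 + 3*n 8 : ℕ) : ℤ)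
          - (((n 0 + n 1 + n 2 + n 3 + n 4 + n 5)
            + min ((n 8 + n 6) / 2) ((n 7 + n 8 + 2 * n 6) / 3) : ℕ) : ℤ)) * 2 := by
        push_cast
        omega
      exact_mod_cast key
    · show b 1 ≤ _ * ((cox 1 : ℕ) : ℚ)
      rw [e1, show ((cox 1 : ℕ) : ℚ) = 3 by norm_num [show cox 1 = 3 from rfl]]
      have key : 3*(n 1 : ℤ) + 6*(n 2 : ℤ) + 8*(n 3 : ℤ) + 10*(n 4 : ℤ) + 12*(n 5 : ℤ) + 8*(n 6 : ℤ) + 4*(n 7 : ℤ) + 6*(n 8 : ℤ) ≤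
          (((n 0 + 2*n 1 + 3*n 2 + 4*n 3 + 5*n 4 + 6*n 5 + 4*n 6 + 2*n 7 + 3*n 8 : ℕ) : ℤ)
          - (((n 0 + n 1 + n 2 + n 3 + n 4 + n 5)
            + min ((n 8 + n 6) / 2) ((n 7 + n 8 + 2 * n 6) / 3) : ℕ) : ℤ)) * 3 := by
        push_cast
        omega
      exact_mod_cast key
    · show b 2 ≤ _ * ((cox 2 : ℕ) : ℚ)
      rw [e2, show ((cox 2 : ℕ) : ℚ) = 4 by norm_num [show cox 2 = 4 from rfl]]
      have key : 4*(n 1 : ℤ) + 8*(n 2 : ℤ) + 12*(n 3 : ℤ) + 15*(n 4 : ℤ) + 18*(n 5 : ℤ) + 12*(n 6 : ℤ) + 6*(n 7 : ℤ) + 9*(n 8 : ℤ) ≤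
          (((n 0 + 2*n 1 + 3*n 2 + 4*n 3 + 5*n 4 + 6*n 5 + 4*n 6 + 2*n 7 + 3*n 8 : ℕ) : ℤ)
          - (((n 0 + n 1 + n 2 + n 3 + n 4 + n 5)
            + min ((n 8 + n 6) / 2) ((n 7 + n 8 + 2 * n 6) / 3) : ℕ) : ℤ)) * 4 := by
        push_cast
        omega
      exact_mod_cast key
    · show b 3 ≤ _ * ((cox 3 : ℕ) : ℚ)
      rw [e3, show ((cox 3 : ℕ) : ℚ) = 5 by norm_num [show cox 3 = 5 from rfl]]
      have key : 5*(n 1 : ℤ) + 10*(n 2 : ℤ) + 15*(n 3 : ℤ) + 20*(n 4 : ℤ) + 24*(n 5 : ℤ) + 16*(n 6 : ℤ) + 8*(n 7 : ℤ) + 12*(n 8 : ℤ) ≤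
          (((n 0 + 2*n 1 + 3*n 2 + 4*n 3 + 5*n 4 + 6*n 5 + 4*n 6 + 2*n 7 + 3*n 8 : ℕ) : ℤ)
          - (((n 0 + n 1 + n 2 + n 3 + n 4 + n 5)
            + min ((n 8 + n 6) / 2) ((n 7 + n 8 + 2 * n 6) / 3) : ℕ) : ℤ)) * 5 := by
        push_cast
        omega
      exact_mod_cast key
    · show b 4 ≤ _ * ((cox 4 : ℕ) : ℚ)
      rw [e4, show ((cox 4 : ℕ) : ℚ) = 6 by norm_num [show cox 4 = 6 from rfl]]
      have key : 6*(n 1 : ℤ) + 12*(n 2 : ℤ) + 18*(n 3 : ℤ) + 24*(n 4 : ℤ) + 30*(n 5 : ℤ) + 20*(n 6 : ℤ) + 10*(n 7 : ℤ) + 15*(n 8 : ℤ) ≤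
          (((n 0 + 2*n 1 + 3*n 2 + 4*n 3 + 5*n 4 + 6*n 5 + 4*n 6 + 2*n 7 + 3*n 8 : ℕ) : ℤ)
          - (((n 0 + n 1 + n 2 + n 3 + n 4 + n 5)
            + min ((n 8 + n 6) / 2) ((n 7 + n 8 + 2 * n 6) / 3) : ℕ) : ℤ)) * 6 := by
        push_cast
        omega
      exact_mod_cast key
    · show b 5 ≤ _ * ((cox 5 : ℕ) : ℚ)
      rw [e5, show ((cox 5 : ℕ) : ℚ) = 4 by norm_num [show cox 5 = 4 from rfl]]
      have key : 4*(n 1 : ℤ) + 8*(n 2 : ℤ) + 12*(n 3 : ℤ) + 16*(n 4 : ℤ) + 20*(n 5 : ℤ) + 14*(n 6 : ℤ) + 7*(n 7 : ℤ) + 10*(n 8 : ℤ) ≤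
          (((n 0 + 2*n 1 + 3*n 2 + 4*n 3 + 5*n 4 + 6*n 5 + 4*n 6 + 2*n 7 + 3*n 8 : ℕ) : ℤ)
          - (((n 0 + n 1 + n 2 + n 3 + n 4 + n 5)
            + min ((n 8 + n 6) / 2) ((n 7 + n 8 + 2 * n 6) / 3) : ℕ) : ℤ)) * 4 := by
        push_cast
        omega
      exact_mod_cast key
    · show b 6 ≤ _ * ((cox 6 : ℕ) : ℚ)
      rw [e6, show ((cox 6 : ℕ) : ℚ) = 2 by norm_num [show cox 6 = 2 from rfl]]
      have key : 2*(n 1 : ℤ) + 4*(n 2 : ℤ) + 6*(n 3 : ℤ) + 8*(n 4 : ℤ) + 10*(n 5 : ℤ) + 7*(n 6 : ℤ) + 4*(n 7 : ℤ) + 5*(n 8 : ℤ) ≤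
          (((n 0 + 2*n 1 + 3*n 2 + 4*n 3 + 5*n 4 + 6*n 5 + 4*n 6 + 2*n 7 + 3*n 8 : ℕ) : ℤ)
          - (((n 0 + n 1 + n 2 + n 3 + n 4 + n 5)
            + min ((n 8 + n 6) / 2) ((n 7 + n 8 + 2 * n 6) / 3) : ℕ) : ℤ)) * 2 := by
        push_cast
        omega
      exact_mod_cast key
    · show b 7 ≤ _ * ((cox 7 : ℕ) : ℚ)
      rw [e7, show ((cox 7 : ℕ) : ℚ) = 3 by norm_num [show cox 7 = 3 from rfl]]
      have key : 3*(n 1 : ℤ) + 6*(n 2 : ℤ) + 9*(n 3 : ℤ) + 12*(n 4 : ℤ) + 15*(n 5 : ℤ) + 10*(n 6 : ℤ) + 5*(n 7 : ℤ) + 8*(n 8 : ℤ) ≤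
          (((n 0 + 2*n 1 + 3*n 2 + 4*n 3 + 5*n 4 + 6*n 5 + 4*n 6 + 2*n 7 + 3*n 8 : ℕ) : ℤ)
          - (((n 0 + n 1 + n 2 + n 3 + n 4 + n 5)
            + min ((n 8 + n 6) / 2) ((n 7 + n 8 + 2 * n 6) / 3) : ℕ) : ℤ)) * 3 := by
        push_cast
        omega
      exact_mod_cast key
  · intro m hm
    have g6 := hm 6; have g7 := hm 7
    rw [e6, show cox 6 = 2 from rfl] at g6
    rw [e7, show cox 7 = 3 from rfl] at g7
    have g6' : 2*(n 1:ℤ) + 4*(n 2:ℤ) + 6*(n 3:ℤ) + 8*(n 4:ℤ) + 10*(n 5:ℤ) + 7*(n 6:ℤ) + 4*(n 7:ℤ) + 5*(n 8:ℤ) ≤ m * 2 := by exact_mod_cast g6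
    have g7' : 3*(n 1:ℤ) + 6*(n 2:ℤ) + 9*(n 3:ℤ) + 12*(n 4:ℤ) + 15*(n 5:ℤ) + 10*(n 6:ℤ) + 5*(n 7:ℤ) + 8*(n 8:ℤ) ≤ m * 3 := by exact_mod_cast g7
    push_cast
    omega
end

section
/- For all integers k ≥ 1, M ≥ 1, N ≥ 0, and any real s with 0 ≤ s ≤ k², the quantity (k²/6)(2M² − 3) + (5/2 + k(M+2N) + s)² − (7/4 + 3M + (4/3)M²) is strictly positive. -/
/-- The core inequality in the proof that `Δa > 0` for the flow from the orbi-instanton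
`(N+M, k, ρ_∞)` to `(N, k, ρ_∞)` plus a rank-`M` E-string: for integers `k, M ≥ 1`,
`N ≥ 0`, and any real `s` with `0 ≤ s ≤ k²`,
`(k²/6)(2M² − 3) + (5/2 + k(M+2N) + s)² − (7/4 + 3M + (4/3)M²) > 0`. -/
theorem orbi_instanton_core_inequality (k M N : ℤ) (hk : 1 ≤ k) (hM : 1 ≤ M) (hN : 0 ≤ N)
    (s : ℝ) (hs0 : 0 ≤ s) (hs1 : s ≤ (k : ℝ) ^ 2) :
    0 < ((k : ℝ) ^ 2 / 6) * (2 * (M : ℝ) ^ 2 - 3)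
        + (5 / 2 + (k : ℝ) * ((M : ℝ) + 2 * (N : ℝ)) + s) ^ 2
        - (7 / 4 + 3 * (M : ℝ) + (4 / 3) * (M : ℝ) ^ 2) := by
  have hk' : (1:ℝ) ≤ (k:ℝ) := by exact_mod_cast hk
  have hM' : (1:ℝ) ≤ (M:ℝ) := by exact_mod_cast hM
  have hN' : (0:ℝ) ≤ (N:ℝ) := by exact_mod_cast hN
  have hk0 : (0:ℝ) ≤ (k:ℝ) := by linarith
  have hM0 : (0:ℝ) ≤ (M:ℝ) := by linarith
  have hA : (0:ℝ) ≤ 2*(k:ℝ)*(N:ℝ) + s := by positivity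
  have hB : (0:ℝ) ≤ 5 + 2*(k:ℝ)*(M:ℝ) + 2*(k:ℝ)*(N:ℝ) + s := by positivity
  have hk2 : (0:ℝ) ≤ (k:ℝ)^2 - 1 := by nlinarith
  have hM2 : (0:ℝ) ≤ (M:ℝ)^2 - 1 := by nlinarith
  nlinarith [mul_nonneg hA hB, mul_nonneg hk2 hM2,
    mul_nonneg hM0 (by linarith : (0:ℝ) ≤ 5*(k:ℝ) - 3), sq_nonneg (k:ℝ)]
end

section
/- For nonnegative integers n₂,…,n₆, n_{2'}, n_{3'}, n_{4'}, with b₂ = Σ_{i=2}^6 i·n_i + 2n_{2'} + 3n_{3'} + 4n_{4'}, b₆ defined as the α₆^∨-coordinate of Σ n_i ϖ_i^∨, and N_ρ = Σ_{i=2}^6 n_i + min(⌊(n_{3'}+n_{4'})/2⌋, ⌊(n_{2'}+n_{3'}+2n_{4'})/3⌋), one has (3/2)·b₆ + 9·N_ρ ≤ 16·b₂. -/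
/-- For a dominant E8 coweight `λ̄ = Σ nᵢ ϖᵢ^∨` (all `nᵢ ≥ 0`, indices ordered
`2,3,4,5,6,4',2',3'`) with coroot coordinates `b` (`C·b = n`), setting
`N_ρ = n₂+n₃+n₄+n₅+n₆ + min(⌊(n₃'+n₄')/2⌋, ⌊(n₂'+n₃'+2n₄')/3⌋)`, one has
`(3/2)·b₆ + 9·N_ρ ≤ 16·b₂`. -/
theorem b6_Nrho_bound (n : Fin 8 → ℕ) (b : Fin 8 → ℚ)
    (hb : ∀ i, ∑ j, (E8Cartan i j : ℚ) * b j = (n i : ℚ)) :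
    (3 / 2) * b 4
        + 9 * (((n 0 + n 1 + n 2 + n 3 + n 4)
            + min ((n 7 + n 5) / 2) ((n 6 + n 7 + 2 * n 5) / 3) : ℕ) : ℚ)
      ≤ 16 * b 0 := by
  have h0 := hb 0
  have h1 := hb 1
  have h2 := hb 2
  have h3 := hb 3
  have h4 := hb 4
  have h5 := hb 5
  have h6 := hb 6
  have h7 := hb 7
  simp only [Fin.sum_univ_eight,
    show E8Cartan 0 0 = 2 from by decide,
    show E8Cartan 0 1 = -1 from by decide,
    show E8Cartan 0 2 = 0 from by decide,
    show E8Cartan 0 3 = 0 from by decide,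
    show E8Cartan 0 4 = 0 from by decide,
    show E8Cartan 0 5 = 0 from by decide,
    show E8Cartan 0 6 = 0 from by decide,
    show E8Cartan 0 7 = 0 from by decide,
    show E8Cartan 1 0 = -1 from by decide,
    show E8Cartan 1 1 = 2 from by decide,
    show E8Cartan 1 2 = -1 from by decide,
    show E8Cartan 1 3 = 0 from by decide,
    show E8Cartan 1 4 = 0 from by decide,
    show E8Cartan 1 5 = 0 from by decide,
    show E8Cartan 1 6 = 0 from by decide,
    show E8Cartan 1 7 = 0 from by decide,
    show E8Cartan 2 0 = 0 from by decide,
    show E8Cartan 2 1 = -1 from by decide,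
    show E8Cartan 2 2 = 2 from by decide,
    show E8Cartan 2 3 = -1 from by decide,
    show E8Cartan 2 4 = 0 from by decide,
    show E8Cartan 2 5 = 0 from by decide,
    show E8Cartan 2 6 = 0 from by decide,
    show E8Cartan 2 7 = 0 from by decide,
    show E8Cartan 3 0 = 0 from by decide,
    show E8Cartan 3 1 = 0 from by decide,
    show E8Cartan 3 2 = -1 from by decide,
    show E8Cartan 3 3 = 2 from by decide,
    show E8Cartan 3 4 = -1 from by decide,
    show E8Cartan 3 5 = 0 from by decide,
    show E8Cartan 3 6 = 0 from by decide,
    show E8Cartan 3 7 = 0 from by decide,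
    show E8Cartan 4 0 = 0 from by decide,
    show E8Cartan 4 1 = 0 from by decide,
    show E8Cartan 4 2 = 0 from by decide,
    show E8Cartan 4 3 = -1 from by decide,
    show E8Cartan 4 4 = 2 from by decide,
    show E8Cartan 4 5 = -1 from by decide,
    show E8Cartan 4 6 = 0 from by decide,
    show E8Cartan 4 7 = -1 from by decide,
    show E8Cartan 5 0 = 0 from by decide,
    show E8Cartan 5 1 = 0 from by decide,
    show E8Cartan 5 2 = 0 from by decide,
    show E8Cartan 5 3 = 0 from by decide,
    show E8Cartan 5 4 = -1 from by decide,
    show E8Cartan 5 5 = 2 from by decide,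
    show E8Cartan 5 6 = -1 from by decide,
    show E8Cartan 5 7 = 0 from by decide,
    show E8Cartan 6 0 = 0 from by decide,
    show E8Cartan 6 1 = 0 from by decide,
    show E8Cartan 6 2 = 0 from by decide,
    show E8Cartan 6 3 = 0 from by decide,
    show E8Cartan 6 4 = 0 from by decide,
    show E8Cartan 6 5 = -1 from by decide,
    show E8Cartan 6 6 = 2 from by decide,
    show E8Cartan 6 7 = 0 from by decide,
    show E8Cartan 7 0 = 0 from by decide,
    show E8Cartan 7 1 = 0 from by decide,
    show E8Cartan 7 2 = 0 from by decide,
    show E8Cartan 7 3 = 0 from by decide,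
    show E8Cartan 7 4 = -1 from by decide,
    show E8Cartan 7 5 = 0 from by decide,
    show E8Cartan 7 6 = 0 from by decide,
    show E8Cartan 7 7 = 2 from by decide] at h0 h1 h2 h3 h4 h5 h6 h7
  push_cast at h0 h1 h2 h3 h4 h5 h6 h7
  have key : 32 * b 0 - 3 * b 4 =
      46 * (n 0 : ℚ) + 60 * n 1 + 74 * n 2 + 88 * n 3 + 102 * n 4
        + 68 * n 5 + 34 * n 6 + 51 * n 7 := by
    linear_combination 46 * h0 + 60 * h1 + 74 * h2 + 88 * h3 + 102 * h4
      + 68 * h5 + 34 * h6 + 51 * h7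
  have hnat : 18 * ((n 0 + n 1 + n 2 + n 3 + n 4)
        + min ((n 7 + n 5) / 2) ((n 6 + n 7 + 2 * n 5) / 3))
      ≤ 46 * n 0 + 60 * n 1 + 74 * n 2 + 88 * n 3 + 102 * n 4
        + 68 * n 5 + 34 * n 6 + 51 * n 7 := by
    omega
  have hq : (18 : ℚ) * (((n 0 + n 1 + n 2 + n 3 + n 4)
        + min ((n 7 + n 5) / 2) ((n 6 + n 7 + 2 * n 5) / 3) : ℕ) : ℚ)
      ≤ 46 * (n 0 : ℚ) + 60 * n 1 + 74 * n 2 + 88 * n 3 + 102 * n 4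
        + 68 * n 5 + 34 * n 6 + 51 * n 7 := by
    calc (18 : ℚ) * (((n 0 + n 1 + n 2 + n 3 + n 4)
        + min ((n 7 + n 5) / 2) ((n 6 + n 7 + 2 * n 5) / 3) : ℕ) : ℚ)
        = ((18 * ((n 0 + n 1 + n 2 + n 3 + n 4)
          + min ((n 7 + n 5) / 2) ((n 6 + n 7 + 2 * n 5) / 3)) : ℕ) : ℚ) := by
          push_cast; ring
      _ ≤ ((46 * n 0 + 60 * n 1 + 74 * n 2 + 88 * n 3 + 102 * n 4
          + 68 * n 5 + 34 * n 6 + 51 * n 7 : ℕ) : ℚ) := by exact_mod_cast hnat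
      _ = 46 * (n 0 : ℚ) + 60 * n 1 + 74 * n 2 + 88 * n 3 + 102 * n 4
          + 68 * n 5 + 34 * n 6 + 51 * n 7 := by push_cast; ring
  linarith [hq, key.ge, key.le]
end
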